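/- For all i ≥ 1 and 0 ≤ s < n, D_i(Q_{n,0}) = (-1)^n R_{n,i}^p Q_{n,0}^2, where R_{n,i} = [0,1,...,n-2, i-1]/L_n. -/

import Mathlib

open MvPolynomial Matrix Finset

/-- `[e₁,…,eₙ]`: the determinant of the matrix with `(k,j)`-entry `x_j^{p^{e_k}}`. -/
noncomputable def bracket (p n : ℕ) (e : Fin n → ℕ) : MvPolynomial (Fin n) (ZMod p) :=
  (Matrix.of fun k j : Fin n => (X j : MvPolynomial (Fin n) (ZMod p)) ^ p ^ (e k)).det

/-- `L_n = [0,1,…,n-1]`. -/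
noncomputable def Ln (p n : ℕ) : MvPolynomial (Fin n) (ZMod p) :=
  bracket p n (fun k => (k : ℕ))

/-- `L_{n,s} = [0,1,…,ŝ,…,n]` (entry `s` omitted from `0,…,n`). -/
noncomputable def Lns (p n s : ℕ) : MvPolynomial (Fin n) (ZMod p) :=
  bracket p n (fun k => if (k : ℕ) < s then (k : ℕ) else (k : ℕ) + 1)

/-- The `i`-th primitive Steenrod–Milnor operation, as the `F_p`-derivation
with `D_i(x_j) = x_j^{p^i}`. -/
noncomputable def Dop (p n i : ℕ) :
    Derivation (ZMod p) (MvPolynomial (Fin n) (ZMod p)) (MvPolynomial (Fin n) (ZMod p)) :=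
  MvPolynomial.mkDerivation (ZMod p) (fun j : Fin n => (X j) ^ p ^ i)

/-- The action of a matrix `g` on `P_n` by linear substitution of the variables. -/
noncomputable def act (p n : ℕ) (g : Matrix (Fin n) (Fin n) (ZMod p)) :
    MvPolynomial (Fin n) (ZMod p) →ₐ[ZMod p] MvPolynomial (Fin n) (ZMod p) :=
  MvPolynomial.aeval (fun j : Fin n => ∑ k : Fin n, g j k • (X k : MvPolynomial (Fin n) (ZMod p)))

/-!
Since `[1,…,n] = L_n^p`, the case `s = 0` of the hypothesis reads `L_n^p = L_n Q_{n,0}`.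
The derivation `D_i` kills `p`-th powers, so differentiating gives
`L_n D_i(Q_{n,0}) = -Q_{n,0} D_i(L_n)`. In the expansion of `L_n` every factor except the one
from the row `x_j^{p^0}` is a `p`-th power, so `D_i(L_n) = [i,1,…,n-1] = (-1)^{n-1}[1,…,n-1,i]
= (-1)^{n-1}(L_n R_{n,i})^p`. Substituting `L_n^p = L_n Q_{n,0}` and cancelling `L_n ≠ 0`
gives the claim.
-/

theorem Derivation.leibniz_prod {R A : Type*} [CommSemiring R] [CommSemiring A] [Algebra R A]
    (D : Derivation R A A) {ι : Type*} [DecidableEq ι] (s : Finset ι) (f : ι → A) :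
    D (∏ j ∈ s, f j) = ∑ j ∈ s, D (f j) * ∏ k ∈ s.erase j, f k := by
  induction s using Finset.induction with
  | empty => simp
  | @insert a s ha ih =>
    rw [prod_insert ha, D.leibniz, ih, smul_eq_mul, smul_eq_mul, sum_insert ha,
      erase_insert ha, mul_sum, add_comm, mul_comm]
    congr 1
    refine sum_congr rfl fun j hj => ?_
    rw [erase_insert_of_ne (ne_of_mem_of_not_mem hj ha).symm,
      prod_insert fun h => ha (mem_of_mem_erase h)]
    ring

theorem Derivation.map_pow_char {R A : Type*} [CommSemiring R] [CommSemiring A] [Algebra R A]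
    (D : Derivation R A A) (p : ℕ) [CharP A p] (a : A) : D (a ^ p) = 0 := by
  rw [D.leibniz_pow, nsmul_eq_mul, CharP.cast_eq_zero, zero_mul]

theorem prod_X_pow_eq_monomial_equivFunOnFinite {σ R : Type*} [Fintype σ] [CommSemiring R]
    (f : σ → ℕ) :
    ∏ j, (X j : MvPolynomial σ R) ^ f j = monomial (Finsupp.equivFunOnFinite.symm f) 1 := by
  rw [monomial_eq, C_1, one_mul, Finsupp.prod_fintype _ _ fun _ => pow_zero _]
  rfl

section Brackets

variable {p n : ℕ}

theorem bracket_add_one [Fact p.Prime] (e : Fin n → ℕ) :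
    bracket p n (fun k => e k + 1) = bracket p n e ^ p := by
  rw [bracket, bracket, ← frobenius_def, RingHom.map_det, RingHom.mapMatrix_apply]
  congr 1
  ext k j
  simp [frobenius_def, ← pow_mul, pow_succ]

theorem bracket_comp_perm (e : Fin n → ℕ) (σ : Equiv.Perm (Fin n)) :
    bracket p n (e ∘ σ) =
      ((Equiv.Perm.sign σ : ℤ) : MvPolynomial (Fin n) (ZMod p)) * bracket p n e :=
  det_permute σ (of fun k j : Fin n => (X j : MvPolynomial (Fin n) (ZMod p)) ^ p ^ (e k))

theorem Ln_ne_zero [Fact p.Prime] : Ln p n ≠ 0 := by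
  have hp : 2 ≤ p := Nat.Prime.two_le Fact.out
  -- the diagonal monomial `∏ x_j^{p^j}` occurs only in the term of the identity permutation
  suffices coeff (Finsupp.equivFunOnFinite.symm fun j : Fin n => p ^ (j : ℕ)) (Ln p n) = 1 by
    intro h
    simp [h] at this
  simp only [Ln, bracket, det_apply, of_apply, coeff_sum, Units.smul_def,
    prod_X_pow_eq_monomial_equivFunOnFinite]
  rw [sum_eq_single 1]
  · simp
  · intro σ _ hσ
    rw [coeff_smul, coeff_monomial, if_neg, smul_zero]
    intro heq
    exact hσ (Equiv.ext fun j => Fin.ext <|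
      Nat.pow_right_injective hp (congrFun (Finsupp.equivFunOnFinite.symm.injective heq) j))
  · simp

theorem Dop_X_pow_pow_eq_zero {i e : ℕ} (he : e ≠ 0) (j : Fin n) :
    Dop p n i (X j ^ p ^ e) = 0 := by
  obtain ⟨f, rfl⟩ := Nat.exists_eq_succ_of_ne_zero he
  rw [pow_succ, pow_mul, Derivation.map_pow_char]

theorem Dop_bracket (i : ℕ) (e : Fin n → ℕ) (r : Fin n) (hr : e r = 0)
    (he : ∀ k ≠ r, e k ≠ 0) :
    Dop p n i (bracket p n e) = bracket p n (Function.update e r i) := by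
  rw [bracket, bracket, det_apply, det_apply, map_sum]
  refine sum_congr rfl fun σ _ => ?_
  rw [Units.smul_def, Units.smul_def, map_zsmul, Derivation.leibniz_prod,
    sum_eq_single (σ.symm r), ← mul_prod_erase univ _ (mem_univ (σ.symm r))]
  · simp only [of_apply, Equiv.apply_symm_apply, hr, Function.update_self, pow_zero, pow_one]
    congr 2
    · exact mkDerivation_X _ _ _
    · refine prod_congr rfl fun j hj => ?_
      rw [Function.update_of_ne]
      exact fun h => ne_of_mem_erase hj (by rw [← h, Equiv.symm_apply_apply])
  · intro j _ hj
    rw [of_apply, Dop_X_pow_pow_eq_zero (he _ _), zero_mul]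
    exact fun h => hj (by rw [← h, Equiv.symm_apply_apply])
  · simp

/-- Rotating the rows turns `[i,1,…,m]` into `[1,…,m,i] = [0,…,m-1,i-1]^p`. -/
theorem Dop_Ln [Fact p.Prime] {m i : ℕ} (hi : 1 ≤ i) :
    Dop p (m + 1) i (Ln p (m + 1)) = (-1) ^ m *
      bracket p (m + 1) (fun k => if (k : ℕ) = m then i - 1 else (k : ℕ)) ^ p := by
  set e := Function.update (fun k : Fin (m + 1) => (k : ℕ)) 0 i
  have hrot : e ∘ finRotate (m + 1) =
      fun k : Fin (m + 1) => (if (k : ℕ) = m then i - 1 else (k : ℕ)) + 1 := by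
    funext k
    rcases Fin.eq_castSucc_or_eq_last k with ⟨k, rfl⟩ | rfl
    · simp [e, k.is_lt.ne]
    · simp only [e, Function.comp_apply, finRotate_last, Function.update_self, Fin.val_last,
        if_true]
      omega
  have hperm := bracket_comp_perm (p := p) e (finRotate (m + 1))
  rw [hrot, bracket_add_one, sign_finRotate] at hperm
  rw [Ln, Dop_bracket i _ 0 rfl fun k hk => Fin.val_ne_zero_iff.mpr hk, hperm]
  push_cast
  rw [← mul_assoc, ← mul_pow]
  norm_num
  rfl

theorem Lns_zero [Fact p.Prime] : Lns p n 0 = Ln p n ^ p :=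
  bracket_add_one _

end Brackets

theorem stmt9 (p n : ℕ) [Fact p.Prime] (hn : 1 ≤ n)
    (Q : ℕ → MvPolynomial (Fin n) (ZMod p))
    (hQ : ∀ s < n, Lns p n s = Ln p n * Q s)
    (R : ℕ → MvPolynomial (Fin n) (ZMod p))
    (hR : ∀ i, 1 ≤ i →
      bracket p n (fun k => if (k : ℕ) = n - 1 then i - 1 else (k : ℕ)) = Ln p n * R i)
    (i : ℕ) (hi : 1 ≤ i) :
    Dop p n i (Q 0) =
      (-1 : MvPolynomial (Fin n) (ZMod p)) ^ n * (R i) ^ p * (Q 0) ^ 2 := by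
  obtain ⟨m, rfl⟩ : ∃ m, n = m + 1 := ⟨n - 1, by omega⟩
  have hLp : Ln p (m + 1) ^ p = Ln p (m + 1) * Q 0 := by
    rw [← Lns_zero]
    exact hQ 0 m.succ_pos
  have hDL : Dop p (m + 1) i (Ln p (m + 1)) = (-1) ^ m * (Ln p (m + 1) * R i) ^ p := by
    rw [Dop_Ln hi, ← hR i hi, Nat.add_sub_cancel]
  have hD := congrArg (Dop p (m + 1) i) hLp
  rw [Derivation.map_pow_char, Derivation.leibniz, smul_eq_mul, smul_eq_mul, hDL, mul_pow,
    hLp] at hD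
  refine mul_left_cancel₀ Ln_ne_zero ?_
  linear_combination -hD
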